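/- For every integer a ≥ 3, the genus of T(a) equals (a/5)·(l_a + l_{a−2}) + 2, and the Frobenius number of T(a) equals 2·l_a + 1 if a ∈ {3, 4, 5}, and equals ⌈(a − 1)/2⌉·l_a − 1 if a ≥ 6. -/

import Mathlib

/-!
Write `L = lucas a`. The elements of `T a` are the numbers `m * L + w` with `w` a sum of exactly
`m` Lucas numbers. Since Lucas numbers can be split (`l (n+2) = l (n+1) + l n`, `2 = 1 + 1`), such
a representation exists iff `Z w ≤ m ≤ w`, where `Z w = greedyCount w` is the least number of
Lucas summands of `w`; the greedy algorithm attains it. Trading copies of `L` between the two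
parts shows that for `y < L` the number `m * L + y` is a gap exactly when `m < Z y`, with the two
exceptions `L` and `2 * L + 1`. So the genus is `∑_{y < L} Z y + 2`, which the recursion
`Z (l (k+1) + y) = Z y + 1` for `y < l k` evaluates to `a * fib (a - 1) + 2`, and the Frobenius
number comes from `max_{y < L} Z y = a / 2`, attained at `y = L - 1`.
-/

/-- The Lucas sequence: l 0 = 2, l 1 = 1, l (n+2) = l (n+1) + l n. -/
def lucas : ℕ → ℕ
  | 0 => 2
  | 1 => 1
  | n + 2 => lucas (n + 1) + lucas n

/-- The modified (monotone) Lucas sequence: l̃ 0 = 1, l̃ 1 = 2, l̃ n = l n for n ≥ 2. -/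
def ltil : ℕ → ℕ
  | 0 => 1
  | 1 => 2
  | n + 2 => lucas (n + 2)

/-- β x : minimal number of summands in a representation of x as a sum of
modified Lucas numbers (with repetitions allowed). -/
noncomputable def beta (x : ℕ) : ℕ :=
  sInf {s : ℕ | ∃ k : ℕ, ∃ b : ℕ → ℕ,
    x = ∑ i ∈ Finset.range (k + 1), b i * ltil i ∧ s = ∑ i ∈ Finset.range (k + 1), b i}

/-- γ x : the greatest k with l̃ k ≤ x (for x ≥ 1). -/
noncomputable def gamma (x : ℕ) : ℕ := sSup {k : ℕ | ltil k ≤ x}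

/-- S a : the additive submonoid of ℕ generated by {l_a} ∪ {l_a + l_n : n ∈ ℕ}. -/
def Sset (a : ℕ) : AddSubmonoid ℕ :=
  AddSubmonoid.closure ({lucas a} ∪ {x : ℕ | ∃ n : ℕ, x = lucas a + lucas n})

/-- T a : the additive submonoid of ℕ generated by {l_a + l_n : n ∈ ℕ}. -/
def Tset (a : ℕ) : AddSubmonoid ℕ :=
  AddSubmonoid.closure {x : ℕ | ∃ n : ℕ, x = lucas a + lucas n}

lemma mul_add_div_and_mod {L m y : ℕ} (hy : y < L) :
    (m * L + y) / L = m ∧ (m * L + y) % L = y :=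
  (Nat.div_mod_unique (by omega)).mpr ⟨by ring, hy⟩

def mulAddFinset (L : ℕ) (f : ℕ → ℕ) : Finset ℕ :=
  (Finset.range L).biUnion fun y => (Finset.range (f y)).image (· * L + y)

lemma mem_mulAddFinset {L x : ℕ} {f : ℕ → ℕ} (hL : 0 < L) :
    x ∈ mulAddFinset L f ↔ x / L < f (x % L) := by
  simp only [mulAddFinset, Finset.mem_biUnion, Finset.mem_range, Finset.mem_image]
  constructor
  · rintro ⟨y, hy, m, hm, rfl⟩
    rwa [(mul_add_div_and_mod hy).1, (mul_add_div_and_mod hy).2]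
  · exact fun h => ⟨x % L, Nat.mod_lt x hL, x / L, h, Nat.div_add_mod' x L⟩

lemma card_mulAddFinset {L : ℕ} (f : ℕ → ℕ) :
    (mulAddFinset L f).card = ∑ y ∈ Finset.range L, f y := by
  rw [mulAddFinset, Finset.card_biUnion]
  · refine Finset.sum_congr rfl fun y hy => ?_
    rw [Finset.card_image_of_injective _ fun m₁ m₂ h => ?_, Finset.card_range]
    have hyL : y < L := Finset.mem_range.mp hy
    simpa [(mul_add_div_and_mod hyL).1] using congrArg (· / L) h
  · intro y₁ hy₁ y₂ hy₂ hne
    simp only [Finset.coe_range, Set.mem_Iio] at hy₁ hy₂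
    refine Finset.disjoint_left.mpr fun x hx₁ hx₂ => hne ?_
    simp only [Finset.mem_image] at hx₁ hx₂
    obtain ⟨m₁, -, rfl⟩ := hx₁
    obtain ⟨m₂, -, h⟩ := hx₂
    rw [← (mul_add_div_and_mod hy₁).2, ← h, (mul_add_div_and_mod hy₂).2]

lemma lucas_add_two (n : ℕ) : lucas (n + 2) = lucas (n + 1) + lucas n := rfl

lemma one_le_lucas (n : ℕ) : 1 ≤ lucas n := by
  induction n using Nat.strong_induction_on with
  | _ n ih =>
    match n with
    | 0 | 1 => decide
    | m + 2 => have := ih m (by omega); rw [lucas_add_two]; omega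

lemma lucas_add_lucas_eq_five_mul_fib (n : ℕ) : lucas (n + 2) + lucas n = 5 * Nat.fib (n + 1) := by
  induction n using Nat.strong_induction_on with
  | _ n ih =>
    match n with
    | 0 | 1 => decide
    | m + 2 =>
      have h₁ := ih m (by omega)
      have h₂ : lucas (m + 3) + lucas (m + 1) = 5 * Nat.fib (m + 2) := ih (m + 1) (by omega)
      have h₃ : lucas (m + 4) = lucas (m + 3) + lucas (m + 2) := lucas_add_two (m + 2)
      have h₄ := lucas_add_two m
      have h₅ : Nat.fib (m + 3) = Nat.fib (m + 1) + Nat.fib (m + 2) := Nat.fib_add_two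
      show lucas (m + 4) + lucas (m + 2) = 5 * Nat.fib (m + 3)
      omega

lemma lucas_add (m n : ℕ) :
    lucas (m + n + 1) = Nat.fib n * lucas m + Nat.fib (n + 1) * lucas (m + 1) := by
  induction n using Nat.strong_induction_on with
  | _ n ih =>
    match n with
    | 0 => simp
    | 1 =>
      show lucas (m + 2) = 1 * lucas m + 1 * lucas (m + 1)
      rw [lucas_add_two]
      ring
    | k + 2 =>
      rw [show m + (k + 2) + 1 = m + k + 1 + 2 by ring, lucas_add_two, Nat.fib_add_two,
        Nat.fib_add_two, show m + k + 1 + 1 = m + (k + 1) + 1 by ring, ih k (by omega),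
        ih (k + 1) (by omega)]
      ring

lemma ltil_eq_lucas {n : ℕ} (h : 2 ≤ n) : ltil n = lucas n := by
  obtain ⟨m, rfl⟩ := Nat.exists_eq_add_of_le' h
  rfl

lemma one_le_ltil (n : ℕ) : 1 ≤ ltil n := by
  match n with
  | 0 | 1 => decide
  | m + 2 => exact one_le_lucas _

lemma ltil_strictMono : StrictMono ltil := by
  refine strictMono_nat_of_lt_succ fun n => ?_
  match n with
  | 0 | 1 => decide
  | m + 2 =>
    have := one_le_lucas (m + 1)
    have : lucas (m + 3) = lucas (m + 2) + lucas (m + 1) := lucas_add_two (m + 1)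
    show lucas (m + 2) < lucas (m + 3)
    omega

lemma lucas_le_lucas {m n : ℕ} (hm : 2 ≤ m) (h : m ≤ n) : lucas m ≤ lucas n := by
  rw [← ltil_eq_lucas hm, ← ltil_eq_lucas (hm.trans h)]
  exact ltil_strictMono.monotone h

lemma four_le_lucas {a : ℕ} (ha : 3 ≤ a) : 4 ≤ lucas a :=
  lucas_le_lucas (m := 3) (by norm_num) ha

lemma lt_ltil (n : ℕ) : n < ltil n := by
  induction n with
  | zero => decide
  | succ k ih => have := ltil_strictMono (lt_add_one k); omega

lemma ltil_add_two {k : ℕ} (h : k ≠ 1) : ltil (k + 2) = ltil (k + 1) + ltil k := by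
  match k, h with
  | 0, _ => rfl
  | m + 2, _ => exact lucas_add_two (m + 2)

lemma range_ltil : Set.range ltil = Set.range lucas := by
  ext x
  constructor <;> rintro ⟨_ | _ | m, rfl⟩
  exacts [⟨1, rfl⟩, ⟨0, rfl⟩, ⟨m + 2, rfl⟩, ⟨1, rfl⟩, ⟨0, rfl⟩, ⟨m + 2, rfl⟩]

def greedyIndex (y : ℕ) : ℕ := Nat.findGreatest (fun k => ltil k ≤ y) y

lemma ltil_greedyIndex_le {y : ℕ} (hy : 1 ≤ y) : ltil (greedyIndex y) ≤ y :=
  Nat.findGreatest_spec (P := fun k => ltil k ≤ y) (Nat.zero_le y) hy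

lemma lt_ltil_greedyIndex_succ (y : ℕ) : y < ltil (greedyIndex y + 1) := by
  by_contra! hc
  have := lt_ltil (greedyIndex y + 1)
  exact Nat.findGreatest_is_greatest (lt_add_one (greedyIndex y))
    (show greedyIndex y + 1 ≤ y by omega) hc

lemma le_greedyIndex {k y : ℕ} (h : ltil k ≤ y) : k ≤ greedyIndex y :=
  Nat.le_findGreatest (by have := lt_ltil k; omega) h

lemma greedyIndex_eq {k y : ℕ} (h₁ : ltil k ≤ y) (h₂ : y < ltil (k + 1)) :
    greedyIndex y = k := by
  refine le_antisymm ?_ (le_greedyIndex h₁)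
  by_contra! hk
  have : ltil (k + 1) ≤ ltil (greedyIndex y) := ltil_strictMono.monotone hk
  have := ltil_greedyIndex_le (le_trans (one_le_ltil k) h₁)
  omega

/-- The greedy count, run with explicit fuel so that small values can be evaluated by `decide`. -/
def greedyCountAux : ℕ → ℕ → ℕ
  | 0, _ => 0
  | fuel + 1, y => if y = 0 then 0 else greedyCountAux fuel (y - ltil (greedyIndex y)) + 1

def greedyCount (y : ℕ) : ℕ := greedyCountAux y y

lemma greedyCountAux_zero_right (f : ℕ) : greedyCountAux f 0 = 0 := by
  cases f <;> rfl

lemma greedyCountAux_eq_of_le {f g y : ℕ} (hf : y ≤ f) (hg : y ≤ g) :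
    greedyCountAux f y = greedyCountAux g y := by
  induction f generalizing y g with
  | zero =>
    obtain rfl : y = 0 := by omega
    exact (greedyCountAux_zero_right _).trans (greedyCountAux_zero_right _).symm
  | succ f ih =>
    rcases Nat.eq_zero_or_pos y with rfl | hy
    · simp only [greedyCountAux_zero_right]
    obtain ⟨g, rfl⟩ := Nat.exists_eq_add_of_le' (show 1 ≤ g by omega)
    have := one_le_ltil (greedyIndex y)
    simp only [greedyCountAux, Nat.pos_iff_ne_zero.mp hy, if_false]
    rw [ih (by omega) (show y - ltil (greedyIndex y) ≤ g by omega)]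

@[simp] lemma greedyCount_zero : greedyCount 0 = 0 := rfl

lemma greedyCount_eq_of_pos {y : ℕ} (hy : 1 ≤ y) :
    greedyCount y = greedyCount (y - ltil (greedyIndex y)) + 1 := by
  obtain ⟨m, rfl⟩ := Nat.exists_eq_add_of_le' hy
  have := one_le_ltil (greedyIndex (m + 1))
  simp only [greedyCount, greedyCountAux, Nat.add_one_ne_zero, if_false]
  rw [greedyCountAux_eq_of_le (g := m + 1 - ltil (greedyIndex (m + 1))) (by omega) le_rfl]

lemma greedyCount_eq_of_mem_Ico {k z : ℕ} (h₁ : ltil k ≤ z) (h₂ : z < ltil (k + 1)) :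
    greedyCount z = greedyCount (z - ltil k) + 1 := by
  rw [greedyCount_eq_of_pos (le_trans (one_le_ltil k) h₁), greedyIndex_eq h₁ h₂]

lemma greedyCount_eq_zero_iff {y : ℕ} : greedyCount y = 0 ↔ y = 0 := by
  refine ⟨fun h => ?_, by rintro rfl; rfl⟩
  by_contra hy
  rw [greedyCount_eq_of_pos (by omega)] at h
  omega

lemma greedyCount_ltil (k : ℕ) : greedyCount (ltil k) = 1 := by
  rw [greedyCount_eq_of_mem_Ico le_rfl (ltil_strictMono (lt_add_one k)), Nat.sub_self,
    greedyCount_zero]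

lemma greedyCount_lucas (n : ℕ) : greedyCount (lucas n) = 1 := by
  obtain ⟨k, hk⟩ : lucas n ∈ Set.range ltil := range_ltil ▸ ⟨n, rfl⟩
  rw [← hk, greedyCount_ltil]

lemma greedyCount_one : greedyCount 1 = 1 := greedyCount_lucas 1

lemma greedyCount_le_greedyCount_add_ltil_sub_of_lt_five : ∀ t < 5, ∀ i < t, ∀ α < ltil i,
    greedyCount α ≤ greedyCount (α + ltil t - ltil i) := by
  decide

/-- The induction descends from `t` to `t - 2` through the Lucas recurrence, which for `ltil`
fails only at index `3`; the cases `t < 5` are checked by computation. -/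
lemma greedyCount_le_greedyCount_add_ltil_sub {t i α : ℕ} (hi : i < t) (hα : α < ltil i)
    (hα_stable : ∀ j, ltil j ≤ α → greedyCount α ≤ greedyCount (α - ltil j) + 1) :
    greedyCount α ≤ greedyCount (α + ltil t - ltil i) := by
  induction t using Nat.strong_induction_on generalizing i with
  | _ t ih =>
    rcases lt_or_ge t 5 with ht | ht
    · exact greedyCount_le_greedyCount_add_ltil_sub_of_lt_five t ht i hi α hα
    obtain ⟨n, rfl⟩ : ∃ n, t = n + 3 := ⟨t - 3, by omega⟩
    have hD : ltil (n + 3) = ltil (n + 2) + ltil (n + 1) := ltil_add_two (by omega)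
    have hA : ltil (n + 2) = ltil (n + 1) + ltil n := ltil_add_two (by omega)
    have step₁ : ∀ z, ltil (n + 1) ≤ z → z < ltil (n + 2) →
        greedyCount z = greedyCount (z - ltil (n + 1)) + 1 :=
      fun z => greedyCount_eq_of_mem_Ico
    have step₂ : ∀ z, ltil (n + 2) ≤ z → z < ltil (n + 3) →
        greedyCount z = greedyCount (z - ltil (n + 2)) + 1 :=
      fun z => greedyCount_eq_of_mem_Ico
    rcases (show i ≤ n ∨ i = n + 1 ∨ i = n + 2 by omega) with hin | rfl | rfl
    · have : ltil i ≤ ltil (n + 1) := ltil_strictMono.monotone (by omega)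
      have hIH := ih (n + 1) (by omega) (by omega : i < n + 1) hα
      rw [step₂ (α + ltil (n + 3) - ltil i) (by omega) (by omega),
        show α + ltil (n + 3) - ltil i - ltil (n + 2) = α + ltil (n + 1) - ltil i by omega]
      omega
    · rw [step₂ (α + ltil (n + 3) - ltil (n + 1)) (by omega) (by omega),
        show α + ltil (n + 3) - ltil (n + 1) - ltil (n + 2) = α by omega]
      omega
    · rw [show α + ltil (n + 3) - ltil (n + 2) = α + ltil (n + 1) by omega]
      rcases lt_or_ge (α + ltil (n + 1)) (ltil (n + 2)) with hw | hw
      · rw [step₁ _ (by omega) hw, Nat.add_sub_cancel]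
        omega
      · rw [step₂ _ hw (by omega), show α + ltil (n + 1) - ltil (n + 2) = α - ltil n by omega]
        exact hα_stable n (by omega)

lemma greedyCount_le_greedyCount_sub_add_one {y j : ℕ} (hj : ltil j ≤ y) :
    greedyCount y ≤ greedyCount (y - ltil j) + 1 := by
  induction y using Nat.strong_induction_on generalizing j with
  | _ y ih =>
    have hy : 1 ≤ y := le_trans (one_le_ltil j) hj
    rw [greedyCount_eq_of_pos hy]
    set t := greedyIndex y
    have ht₁ : ltil t ≤ y := ltil_greedyIndex_le hy
    have ht₂ : y < ltil (t + 1) := lt_ltil_greedyIndex_succ y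
    have hpos := one_le_ltil t
    have hjt : j ≤ t := by
      by_contra! h
      have : ltil (t + 1) ≤ ltil j := ltil_strictMono.monotone h
      omega
    rcases hjt.lt_or_eq with hjt | rfl
    · rcases lt_or_ge (y - ltil j) (ltil t) with h | h
      · -- the greedy remainder `y - ltil t` lies below `ltil j`: shift it up to `y - ltil j`
        have := greedyCount_le_greedyCount_add_ltil_sub (α := y - ltil t) hjt (by omega)
          (fun j' hj' => ih _ (by omega) hj')
        rw [show y - ltil t + ltil t - ltil j = y - ltil j by omega] at this
        omega
      · have := ih (y - ltil t) (by omega) (j := j) (by omega)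
        rw [greedyCount_eq_of_mem_Ico h (by omega),
          show y - ltil j - ltil t = y - ltil t - ltil j by omega]
        omega
    · rfl

def IsLucasSum (m w : ℕ) : Prop :=
  ∃ s : Multiset ℕ, Multiset.card s = m ∧ (s.map lucas).sum = w

namespace IsLucasSum

lemma zero : IsLucasSum 0 0 := ⟨0, rfl, rfl⟩

lemma single (n : ℕ) : IsLucasSum 1 (lucas n) := ⟨{n}, rfl, by simp⟩

lemma add {m₁ w₁ m₂ w₂ : ℕ} (h₁ : IsLucasSum m₁ w₁) (h₂ : IsLucasSum m₂ w₂) :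
    IsLucasSum (m₁ + m₂) (w₁ + w₂) := by
  obtain ⟨s₁, rfl, rfl⟩ := h₁
  obtain ⟨s₂, rfl, rfl⟩ := h₂
  exact ⟨s₁ + s₂, by simp, by simp⟩

lemma le {m w : ℕ} (h : IsLucasSum m w) : m ≤ w := by
  obtain ⟨s, rfl, rfl⟩ := h
  simpa using Multiset.card_nsmul_le_sum (s := s.map lucas) (a := 1) (by simp [one_le_lucas])

lemma greedyCount_le {m w : ℕ} (h : IsLucasSum m w) : greedyCount w ≤ m := by
  obtain ⟨s, rfl, rfl⟩ := h
  induction s using Multiset.induction with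
  | empty => simp
  | cons n s ih =>
    obtain ⟨i, hi⟩ : lucas n ∈ Set.range ltil := range_ltil ▸ ⟨n, rfl⟩
    have := greedyCount_le_greedyCount_sub_add_one (y := ((n ::ₘ s).map lucas).sum)
      (j := i) (by simp [hi])
    simp only [Multiset.map_cons, Multiset.sum_cons, Multiset.card_cons, ← hi,
      Nat.add_sub_cancel_left] at this ⊢
    omega

/-- Splitting a part `lucas (n + 2) = lucas (n + 1) + lucas n`, or `lucas 0 = lucas 1 + lucas 1`,
adds a summand. -/
lemma succ {m w : ℕ} (h : IsLucasSum m w) (hmw : m < w) : IsLucasSum (m + 1) w := by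
  obtain ⟨s, rfl, rfl⟩ := h
  obtain ⟨n, hn, hn1⟩ : ∃ n ∈ s, n ≠ 1 := by
    by_contra! hs
    have : s.map lucas = s.map fun _ => 1 := Multiset.map_congr rfl fun n hn => by
      rw [hs n hn]; rfl
    simp [this] at hmw
  obtain ⟨p, q, hpq⟩ : ∃ p q, lucas n = lucas p + lucas q := by
    match n, hn1 with
    | 0, _ => exact ⟨1, 1, rfl⟩
    | k + 2, _ => exact ⟨k + 1, k, rfl⟩
  refine ⟨p ::ₘ q ::ₘ s.erase n, ?_, ?_⟩
  · simp only [Multiset.card_cons, Multiset.card_erase_add_one hn]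
  · rw [← Multiset.cons_erase hn]
    simp only [Multiset.map_cons, Multiset.sum_cons, Multiset.erase_cons_head, hpq]
    ring

end IsLucasSum

lemma isLucasSum_greedyCount (w : ℕ) : IsLucasSum (greedyCount w) w := by
  induction w using Nat.strong_induction_on with
  | _ w ih =>
    rcases Nat.eq_zero_or_pos w with rfl | hw
    · exact IsLucasSum.zero
    obtain ⟨n, hn⟩ : ltil (greedyIndex w) ∈ Set.range lucas := range_ltil ▸ ⟨_, rfl⟩
    have h₁ := ltil_greedyIndex_le hw
    have := (ih (w - ltil (greedyIndex w)) (Nat.sub_lt hw (one_le_ltil _))).add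
      (IsLucasSum.single n)
    rwa [hn, Nat.sub_add_cancel (hn ▸ h₁), ← greedyCount_eq_of_pos hw] at this

lemma greedyCount_add_le (x y : ℕ) : greedyCount (x + y) ≤ greedyCount x + greedyCount y :=
  ((isLucasSum_greedyCount x).add (isLucasSum_greedyCount y)).greedyCount_le

lemma isLucasSum_iff {m w : ℕ} : IsLucasSum m w ↔ greedyCount w ≤ m ∧ m ≤ w := by
  refine ⟨fun h => ⟨h.greedyCount_le, h.le⟩, ?_⟩
  rintro ⟨h₁, h₂⟩
  induction m, h₁ using Nat.le_induction with
  | base => exact isLucasSum_greedyCount w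
  | succ m _ ih => exact (ih (by omega)).succ (by omega)

lemma mem_Tset_iff {a x : ℕ} :
    x ∈ Tset a ↔ ∃ m w, x = m * lucas a + w ∧ IsLucasSum m w := by
  constructor
  · intro hx
    induction hx using AddSubmonoid.closure_induction with
    | mem y hy =>
      obtain ⟨n, rfl⟩ := hy
      exact ⟨1, lucas n, by ring, IsLucasSum.single n⟩
    | zero => exact ⟨0, 0, by simp, IsLucasSum.zero⟩
    | add y z _ _ hy hz =>
      obtain ⟨m₁, w₁, rfl, h₁⟩ := hy
      obtain ⟨m₂, w₂, rfl, h₂⟩ := hz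
      exact ⟨m₁ + m₂, w₁ + w₂, by ring, h₁.add h₂⟩
  · rintro ⟨m, w, rfl, s, rfl, rfl⟩
    have : Multiset.card s * lucas a + (s.map lucas).sum =
        (s.map fun n => lucas a + lucas n).sum := by
      simp [Multiset.sum_map_add]
    rw [this]
    exact AddSubmonoid.multiset_sum_mem _ _ fun x hx => by
      obtain ⟨n, -, rfl⟩ := Multiset.mem_map.mp hx
      exact AddSubmonoid.subset_closure ⟨n, rfl⟩

lemma greedyCount_lucas_add {k y : ℕ} (hk : 1 ≤ k) (hy : y < lucas k) :
    greedyCount (lucas (k + 1) + y) = greedyCount y + 1 := by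
  have h₁ : ltil (k + 1) = lucas (k + 1) := ltil_eq_lucas (by omega)
  have h₂ : ltil (k + 1 + 1) = lucas (k + 1) + lucas k := ltil_eq_lucas (by omega)
  rw [greedyCount_eq_of_mem_Ico (k := k + 1) (by omega) (by omega), h₁, Nat.add_sub_cancel_left]

lemma greedyCount_le_of_lt_lucas {a y : ℕ} (ha : 2 ≤ a) (hy : y < lucas a) :
    greedyCount y ≤ a / 2 := by
  induction a using Nat.strong_induction_on generalizing y with
  | _ a ih =>
    match a, ha with
    | 2, _ | 3, _ => revert y; decide
    | k + 4, _ =>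
      rcases lt_or_ge y (lucas (k + 3)) with h | h
      · have := ih (k + 3) (by omega) (by omega) h
        omega
      · obtain ⟨z, rfl⟩ := Nat.exists_eq_add_of_le h
        have : lucas (k + 4) = lucas (k + 3) + lucas (k + 2) := lucas_add_two _
        have hz : z < lucas (k + 2) := by omega
        have := ih (k + 2) (by omega) (by omega) hz
        rw [greedyCount_lucas_add (by omega) hz]
        omega

lemma greedyCount_lucas_sub_one {a : ℕ} (ha : 2 ≤ a) : greedyCount (lucas a - 1) = a / 2 := by
  induction a using Nat.strong_induction_on with
  | _ a ih =>
    match a, ha with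
    | 2, _ | 3, _ => decide
    | k + 4, _ =>
      have := one_le_lucas (k + 2)
      have := ih (k + 2) (by omega) (by omega)
      have : lucas (k + 4) = lucas (k + 3) + lucas (k + 2) := lucas_add_two _
      rw [show lucas (k + 4) - 1 = lucas (k + 3) + (lucas (k + 2) - 1) by omega,
        greedyCount_lucas_add (by omega) (by omega)]
      omega

lemma greedyCount_le_half (y : ℕ) : greedyCount y ≤ (y + 1) / 2 := by
  induction y using Nat.strong_induction_on with
  | _ y ih =>
    match y with
    | 0 | 1 => decide
    | z + 2 =>
      have := greedyCount_add_le z 2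
      have := ih z (by omega)
      have : greedyCount 2 = 1 := greedyCount_lucas 0
      omega

lemma greedyCount_mul_lucas_le (d n : ℕ) : greedyCount (d * lucas n) ≤ d :=
  IsLucasSum.greedyCount_le ⟨Multiset.replicate d n, by simp, by simp⟩

lemma exists_lucas_add_eq_mul_add {a : ℕ} (ha : 1 ≤ a) (k : ℕ) :
    ∃ q r, lucas (a + k) = q * lucas a + r ∧ 1 ≤ q ∧ greedyCount r ≤ q := by
  refine ⟨Nat.fib (k + 1), Nat.fib k * lucas (a - 1), ?_, Nat.fib_pos.mpr k.succ_pos,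
    (greedyCount_mul_lucas_le _ _).trans (Nat.fib_mono k.le_succ)⟩
  rw [show a + k = a - 1 + k + 1 by omega, lucas_add, show a - 1 + 1 = a by omega]
  ring

lemma greedyCount_le_greedyCount_mul_add {a y : ℕ} (ha : 2 ≤ a) (hy : y < lucas a) (j : ℕ) :
    greedyCount y ≤ greedyCount (j * lucas a + y) + j := by
  induction j using Nat.strong_induction_on with
  | _ j ih =>
    rcases Nat.eq_zero_or_pos j with rfl | hj
    · simp
    set L := lucas a with hL
    set z := j * L + y with hz
    have hLz : ltil a ≤ z := by
      rw [ltil_eq_lucas ha]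
      exact (Nat.le_mul_of_pos_left L hj).trans (Nat.le_add_right _ _)
    obtain ⟨k, hk⟩ := Nat.exists_eq_add_of_le (le_greedyIndex hLz)
    have ht₁ : ltil (a + k) ≤ z := hk ▸ ltil_greedyIndex_le (le_trans (one_le_ltil a) hLz)
    have ht₂ : z < ltil (a + k + 1) := hk ▸ lt_ltil_greedyIndex_succ z
    -- the greedy step removes `lucas (a + k) = q * L + r`; trade it for `q` copies of `L`
    obtain ⟨q, r, hqr, hq, hr⟩ := exists_lucas_add_eq_mul_add (a := a) (by omega) k
    rw [← ltil_eq_lucas (by omega), ← hL] at hqr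
    have hqj : q ≤ j := by
      have : q * L < (j + 1) * L := by rw [add_one_mul]; omega
      exact Nat.lt_succ_iff.mp (Nat.lt_of_mul_lt_mul_right this)
    have hsplit : (j - q) * L + y = (z - ltil (a + k)) + r := by
      have : j * L = (j - q) * L + q * L := by rw [← add_mul, Nat.sub_add_cancel hqj]
      omega
    have := greedyCount_eq_of_mem_Ico ht₁ ht₂
    have := greedyCount_add_le (z - ltil (a + k)) r
    have := ih (j - q) (by omega)
    rw [hsplit] at this
    omega

lemma sum_range_lucas_greedyCount (n : ℕ) :
    ∑ y ∈ Finset.range (lucas (n + 2)), greedyCount y = (n + 2) * Nat.fib (n + 1) := by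
  induction n using Nat.strong_induction_on with
  | _ n ih =>
    match n with
    | 0 | 1 => decide
    | m + 2 =>
      have hrec : lucas (m + 4) = lucas (m + 3) + lucas (m + 2) := lucas_add_two _
      have htop : ∑ i ∈ Finset.range (lucas (m + 2)), greedyCount (lucas (m + 3) + i) =
          ∑ i ∈ Finset.range (lucas (m + 2)), (greedyCount i + 1) :=
        Finset.sum_congr rfl fun i hi => greedyCount_lucas_add (by omega) (Finset.mem_range.mp hi)
      have h₁ := ih m (by omega)
      have h₂ : ∑ y ∈ Finset.range (lucas (m + 3)), greedyCount y = (m + 3) * Nat.fib (m + 2) :=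
        ih (m + 1) (by omega)
      have hfib : lucas (m + 2) = Nat.fib (m + 1) * 2 + Nat.fib (m + 2) := by
        simpa only [zero_add, lucas.eq_1, lucas.eq_2, mul_one] using lucas_add 0 (m + 1)
      show ∑ y ∈ Finset.range (lucas (m + 4)), greedyCount y = (m + 4) * Nat.fib (m + 3)
      rw [hrec, Finset.sum_range_add, htop, Finset.sum_add_distrib, h₁, h₂, Finset.sum_const,
        Finset.card_range, smul_eq_mul, mul_one, hfib, Nat.fib_add_two (n := m + 1)]
      ring

lemma greedyCount_le_of_mul_add_mem_Tset {a m y : ℕ} (ha : 2 ≤ a) (hy : y < lucas a)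
    (h : m * lucas a + y ∈ Tset a) : greedyCount y ≤ m := by
  obtain ⟨m', w, hx, hw⟩ := mem_Tset_iff.mp h
  obtain ⟨hZw, -⟩ := isLucasSum_iff.mp hw
  have hm' : m' ≤ m := by
    by_contra! h
    have : (m + 1) * lucas a ≤ m' * lucas a := Nat.mul_le_mul_right _ h
    have : (m + 1) * lucas a = m * lucas a + lucas a := by ring
    omega
  have hw : w = (m - m') * lucas a + y := by
    have : m * lucas a = (m - m') * lucas a + m' * lucas a := by
      rw [← add_mul, Nat.sub_add_cancel hm']
    omega
  have := greedyCount_le_greedyCount_mul_add ha hy (m - m')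
  rw [← hw] at this
  omega

lemma lucas_notMem_Tset (a : ℕ) : lucas a ∉ Tset a := by
  intro h
  obtain ⟨m, w, hx, hw⟩ := mem_Tset_iff.mp h
  obtain ⟨hZw, hmw⟩ := isLucasSum_iff.mp hw
  rcases Nat.eq_zero_or_pos m with rfl | hm
  · rw [zero_mul, zero_add] at hx
    rw [← hx, greedyCount_lucas] at hZw
    omega
  · have : 1 * lucas a ≤ m * lucas a := Nat.mul_le_mul_right _ hm
    omega

lemma two_mul_lucas_add_one_notMem_Tset {a : ℕ} (ha : 3 ≤ a) : 2 * lucas a + 1 ∉ Tset a := by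
  intro h
  obtain ⟨m, w, hx, hw⟩ := mem_Tset_iff.mp h
  obtain ⟨hZw, hmw⟩ := isLucasSum_iff.mp hw
  have hL := four_le_lucas ha
  have hm : m < 3 := by
    by_contra! h
    have : 3 * lucas a ≤ m * lucas a := Nat.mul_le_mul_right _ h
    omega
  interval_cases m
  · have := greedyCount_eq_zero_iff.mp (by omega : greedyCount w = 0)
    omega
  · have hw : w = lucas (a - 1 + 1) + 1 := by rw [show a - 1 + 1 = a by omega]; omega
    have : 3 ≤ lucas (a - 1) := lucas_le_lucas (m := 2) le_rfl (by omega)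
    rw [hw, greedyCount_lucas_add (by omega) (by omega), greedyCount_one] at hZw
    omega
  · omega

lemma mul_add_mem_Tset {a m y : ℕ} (ha : 3 ≤ a) (hm : greedyCount y ≤ m)
    (h₁ : (m, y) ≠ (1, 0)) (h₂ : (m, y) ≠ (2, 1)) : m * lucas a + y ∈ Tset a := by
  rw [mem_Tset_iff]
  by_cases hmy : m ≤ y
  · exact ⟨m, y, rfl, isLucasSum_iff.mpr ⟨hm, hmy⟩⟩
  -- otherwise move `d` copies of `lucas a` into the Lucas sum, balancing its length and count
  set d := (m - greedyCount y) / 2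
  have hL := four_le_lucas ha
  have hZy := greedyCount_le_half y
  have hdL : 4 * d ≤ d * lucas a := by nlinarith
  have hm_split : m * lucas a = (m - d) * lucas a + d * lucas a := by
    rw [← add_mul, Nat.sub_add_cancel (by omega)]
  simp only [ne_eq, Prod.mk.injEq] at h₁ h₂
  refine ⟨m - d, d * lucas a + y, by omega, isLucasSum_iff.mpr ⟨?_, by omega⟩⟩
  have := greedyCount_add_le (d * lucas a) y
  have := greedyCount_mul_lucas_le d a
  omega

def gapFinset (a : ℕ) : Finset ℕ :=
  insert (lucas a) (insert (2 * lucas a + 1) (mulAddFinset (lucas a) greedyCount))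

lemma notMem_Tset_iff_mem_gapFinset {a x : ℕ} (ha : 3 ≤ a) : x ∉ Tset a ↔ x ∈ gapFinset a := by
  have hL := four_le_lucas ha
  obtain ⟨m, y, hy, rfl⟩ : ∃ m y, y < lucas a ∧ x = m * lucas a + y :=
    ⟨x / lucas a, x % lucas a, Nat.mod_lt x (by omega), (Nat.div_add_mod' x _).symm⟩
  rw [gapFinset, Finset.mem_insert, Finset.mem_insert, mem_mulAddFinset (by omega),
    (mul_add_div_and_mod hy).1, (mul_add_div_and_mod hy).2]
  constructor
  · intro hxT
    by_contra! h
    obtain ⟨h₁, h₂, h₃⟩ := h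
    refine hxT (mul_add_mem_Tset ha h₃ ?_ ?_) <;>
    · rintro h
      simp only [Prod.mk.injEq] at h
      obtain ⟨rfl, rfl⟩ := h
      simp at h₁ h₂
  · rintro (h | h | h)
    · rw [h]; exact lucas_notMem_Tset a
    · rw [h]; exact two_mul_lucas_add_one_notMem_Tset ha
    · exact fun hT => h.not_ge (greedyCount_le_of_mul_add_mem_Tset (by omega) hy hT)

lemma five_mul_sum_range_lucas_greedyCount {a : ℕ} (ha : 2 ≤ a) :
    5 * ∑ y ∈ Finset.range (lucas a), greedyCount y = a * (lucas a + lucas (a - 2)) := by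
  obtain ⟨n, rfl⟩ := Nat.exists_eq_add_of_le' ha
  rw [sum_range_lucas_greedyCount, Nat.add_sub_cancel, lucas_add_lucas_eq_five_mul_fib]
  ring

lemma card_gapFinset {a : ℕ} (ha : 3 ≤ a) :
    (gapFinset a).card = ∑ y ∈ Finset.range (lucas a), greedyCount y + 2 := by
  have hL := four_le_lucas ha
  have h := mul_add_div_and_mod (m := 2) (show 1 < lucas a by omega)
  rw [gapFinset, Finset.card_insert_of_notMem, Finset.card_insert_of_notMem, card_mulAddFinset]
  · rw [mem_mulAddFinset (by omega), h.1, h.2, greedyCount_one]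
    omega
  · rw [Finset.mem_insert, mem_mulAddFinset (by omega), Nat.div_self (by omega), Nat.mod_self,
      greedyCount_zero]
    omega

lemma le_or_add_one_le_of_mem_gapFinset {a x : ℕ} (ha : 3 ≤ a) (hx : x ∈ gapFinset a) :
    x ≤ 2 * lucas a + 1 ∨ x + 1 ≤ a / 2 * lucas a := by
  have hL := four_le_lucas ha
  rw [gapFinset, Finset.mem_insert, Finset.mem_insert, mem_mulAddFinset (by omega)] at hx
  rcases hx with rfl | rfl | hx
  · omega
  · omega
  · right
    have hy := Nat.mod_lt x (show 0 < lucas a by omega)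
    have := greedyCount_le_of_lt_lucas (by omega) hy
    have : (x / lucas a + 1) * lucas a ≤ a / 2 * lucas a := Nat.mul_le_mul_right _ (by omega)
    have := Nat.div_add_mod' x (lucas a)
    have : (x / lucas a + 1) * lucas a = x / lucas a * lucas a + lucas a := by ring
    omega

lemma isGreatest_gapFinset_of_le_five {a : ℕ} (ha : 3 ≤ a) (h5 : a ≤ 5) :
    IsGreatest (gapFinset a : Set ℕ) (2 * lucas a + 1) := by
  refine ⟨by simp [gapFinset], fun x hx => ?_⟩
  have : a / 2 * lucas a ≤ 2 * lucas a := Nat.mul_le_mul_right _ (by omega)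
  have := le_or_add_one_le_of_mem_gapFinset ha hx
  omega

lemma isGreatest_gapFinset_of_six_le {a : ℕ} (ha : 6 ≤ a) :
    IsGreatest (gapFinset a : Set ℕ) (a / 2 * lucas a - 1) := by
  have hL := four_le_lucas (a := a) (by omega)
  have hsplit : a / 2 * lucas a = (a / 2 - 1) * lucas a + lucas a := by
    rw [← Nat.succ_mul, Nat.succ_eq_add_one, Nat.sub_add_cancel (by omega)]
  have h3 : 3 * lucas a ≤ a / 2 * lucas a := Nat.mul_le_mul_right _ (by omega)
  refine ⟨?_, fun x hx => ?_⟩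
  · have h := mul_add_div_and_mod (m := a / 2 - 1) (show lucas a - 1 < lucas a by omega)
    rw [Finset.mem_coe, gapFinset, Finset.mem_insert, Finset.mem_insert,
      mem_mulAddFinset (by omega), show a / 2 * lucas a - 1 = (a / 2 - 1) * lucas a + (lucas a - 1) by omega, h.1, h.2,
      greedyCount_lucas_sub_one (by omega)]
    omega
  · have := le_or_add_one_le_of_mem_gapFinset (by omega) hx
    omega

theorem genus_frobenius_T (a : ℕ) (ha : 3 ≤ a) :
    5 * {x : ℕ | x ∉ Tset a}.ncard = a * (lucas a + lucas (a - 2)) + 10 ∧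
    IsGreatest {x : ℕ | x ∉ Tset a}
      (if a ≤ 5 then 2 * lucas a + 1 else (a - 1 + 1) / 2 * lucas a - 1) := by
  have hgaps : {x : ℕ | x ∉ Tset a} = gapFinset a :=
    Set.ext fun x => notMem_Tset_iff_mem_gapFinset ha
  rw [hgaps, Set.ncard_coe_finset, card_gapFinset ha, mul_add,
    five_mul_sum_range_lucas_greedyCount (by omega)]
  refine ⟨rfl, ?_⟩
  split_ifs with h5
  · exact isGreatest_gapFinset_of_le_five ha h5
  · rw [Nat.sub_add_cancel (by omega)]
    exact isGreatest_gapFinset_of_six_le (by omega)
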